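/- arXiv:0806.3722 — 3 statements merged into one kernel-verified Lean document; each statement's English description precedes it below -/
import Mathlib

section
/- Let F2 and F3 be nonempty finite subsets of ℤ² with the same row sums and the same column sums, and let F1 be a uniquely determined neighbour of F2 (hence also of F3). Put α = α(F2, F1). Then |F2 ∩ F3| / |F2| ≥ 1 − 2√2·α / √|F2|. -/
open Finset

/-- The row sum `r_i(F)`: the number of elements of `F` in row `i`. -/
def rowSum (F : Finset (ℤ × ℤ)) (i : ℤ) : ℤ :=
  ((F.filter fun p => p.1 = i).card : ℤ)

/-- The column sum `c_j(F)`: the number of elements of `F` in column `j`. -/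
def colSum (F : Finset (ℤ × ℤ)) (j : ℤ) : ℤ :=
  ((F.filter fun p => p.2 = j).card : ℤ)

/-- `F` is uniquely determined by its line sums. -/
def uniquelyDetermined (F : Finset (ℤ × ℤ)) : Prop :=
  ∀ F' : Finset (ℤ × ℤ),
    (∀ i, rowSum F' i = rowSum F i) → (∀ j, colSum F' j = colSum F j) → F' = F

/-- `Σ_j |c_j(F1) − c_j(F2)| + Σ_i |r_i(F1) − r_i(F2)|`; the sums over all of `ℤ`
reduce to the finite index sets below, since all other terms vanish. -/
def lineDiff (F1 F2 : Finset (ℤ × ℤ)) : ℤ :=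
  (∑ j ∈ (F1 ∪ F2).image Prod.snd, |colSum F1 j - colSum F2 j|)
    + ∑ i ∈ (F1 ∪ F2).image Prod.fst, |rowSum F1 i - rowSum F2 i|

/-- `α(F1, F2)`. -/
noncomputable def alpha (F1 F2 : Finset (ℤ × ℤ)) : ℝ :=
  (lineDiff F1 F2 : ℝ) / 2

/-- `F1` is a uniquely determined neighbour of `F2`: `F1` is uniquely determined by
its line sums, has the same row sums as `F2` in every row, and for some `n` such that
the column sums of both `F1` and `F2` are supported in columns `1, …, n`, there is a
permutation `σ` of `{1, …, n}` ordering the column sums of `F2` non-increasingly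
which also orders the column sums of `F1` non-increasingly. -/
def udNeighbour (F1 F2 : Finset (ℤ × ℤ)) : Prop :=
  uniquelyDetermined F1 ∧ (∀ i, rowSum F1 i = rowSum F2 i) ∧
    ∃ n : ℕ,
      (∀ j : ℤ, j < 1 ∨ (n : ℤ) < j → colSum F2 j = 0) ∧
      (∀ j : ℤ, j < 1 ∨ (n : ℤ) < j → colSum F1 j = 0) ∧
      ∃ σ : Equiv.Perm (Fin n),
        (∀ k l : Fin n, k ≤ l →
          colSum F2 ((σ l : ℕ) + 1 : ℤ) ≤ colSum F2 ((σ k : ℕ) + 1 : ℤ)) ∧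
        (∀ k l : Fin n, k ≤ l →
          colSum F1 ((σ l : ℕ) + 1 : ℤ) ≤ colSum F1 ((σ k : ℕ) + 1 : ℤ))

/-- Row set of `F` in row `i`. -/
def rset (F : Finset (ℤ × ℤ)) (i : ℤ) : Finset ℤ :=
  (F.filter fun p => p.1 = i).image Prod.snd

lemma mem_rset {F : Finset (ℤ × ℤ)} {i j : ℤ} : j ∈ rset F i ↔ (i, j) ∈ F := by
  constructor
  · intro h
    simp only [rset, mem_image, mem_filter] at h
    obtain ⟨p, ⟨hpF, hp1⟩, hp2⟩ := h
    have : p = (i, j) := Prod.ext hp1 hp2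
    rwa [this] at hpF
  · intro h
    simp only [rset, mem_image, mem_filter]
    exact ⟨(i, j), ⟨h, rfl⟩, rfl⟩

lemma card_rset (F : Finset (ℤ × ℤ)) (i : ℤ) :
    ((rset F i).card : ℤ) = rowSum F i := by
  rw [rset, rowSum]
  congr 1
  apply Finset.card_image_of_injOn
  intro p hp q hq hpq
  simp only [coe_filter, Set.mem_setOf_eq] at hp hq
  exact Prod.ext (hp.2.trans hq.2.symm) hpq

lemma card_filter_swap {F : Finset (ℤ × ℤ)} {a b c d : ℤ × ℤ}
    (ha : a ∈ F) (hb : b ∈ F) (hc : c ∉ F) (hd : d ∉ F)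
    (hab : a ≠ b) (hcd : c ≠ d)
    (q : ℤ × ℤ → Prop) [DecidablePred q]
    (hac : q a ↔ q c) (hbd : q b ↔ q d) :
    ((insert c (insert d ((F.erase a).erase b))).filter q).card = (F.filter q).card := by
  rw [filter_insert, filter_insert, filter_erase, filter_erase]
  have hafil : q a → a ∈ F.filter q := fun h => mem_filter.2 ⟨ha, h⟩
  have hbfil : q b → b ∈ F.filter q := fun h => mem_filter.2 ⟨hb, h⟩
  by_cases hqa : q a <;> by_cases hqb : q b
  · rw [if_pos (hac.1 hqa), if_pos (hbd.1 hqb)]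
    have h1 : b ∈ (F.filter q).erase a := mem_erase.2 ⟨fun h => hab h.symm, hbfil hqb⟩
    have h2 : d ∉ ((F.filter q).erase a).erase b := fun h =>
      hd (mem_filter.1 (mem_of_mem_erase (mem_of_mem_erase h))).1
    have h3 : c ∉ insert d (((F.filter q).erase a).erase b) := by
      simp only [mem_insert]
      rintro (rfl | h)
      · exact hcd rfl
      · exact hc (mem_filter.1 (mem_of_mem_erase (mem_of_mem_erase h))).1
    rw [card_insert_of_notMem h3, card_insert_of_notMem h2,
      card_erase_of_mem h1, card_erase_of_mem (hafil hqa)]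
    have h4 : 2 ≤ (F.filter q).card :=
      one_lt_card.2 ⟨a, hafil hqa, b, hbfil hqb, hab⟩
    omega
  · rw [if_pos (hac.1 hqa), if_neg (fun h => hqb (hbd.2 h))]
    have h1 : b ∉ (F.filter q).erase a := fun h =>
      hqb (mem_filter.1 (mem_of_mem_erase h)).2
    rw [erase_eq_of_notMem h1]
    have h2 : c ∉ (F.filter q).erase a := fun h =>
      hc (mem_filter.1 (mem_of_mem_erase h)).1
    rw [card_insert_of_notMem h2, card_erase_of_mem (hafil hqa)]
    have h4 : 1 ≤ (F.filter q).card := card_pos.2 ⟨a, hafil hqa⟩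
    omega
  · rw [if_neg (fun h => hqa (hac.2 h)), if_pos (hbd.1 hqb)]
    have h1 : a ∉ F.filter q := fun h => hqa (mem_filter.1 h).2
    rw [erase_eq_of_notMem h1]
    have h2 : d ∉ (F.filter q).erase b := fun h =>
      hd (mem_filter.1 (mem_of_mem_erase h)).1
    rw [card_insert_of_notMem h2, card_erase_of_mem (hbfil hqb)]
    have h4 : 1 ≤ (F.filter q).card := card_pos.2 ⟨b, hbfil hqb⟩
    omega
  · rw [if_neg (fun h => hqa (hac.2 h)), if_neg (fun h => hqb (hbd.2 h))]
    have h1 : a ∉ F.filter q := fun h => hqa (mem_filter.1 h).2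
    rw [erase_eq_of_notMem h1,
      erase_eq_of_notMem (fun h => hqb (mem_filter.1 h).2)]

lemma rset_nested {F : Finset (ℤ × ℤ)} (hud : uniquelyDetermined F) (i i' : ℤ) :
    rset F i ⊆ rset F i' ∨ rset F i' ⊆ rset F i := by
  by_contra hcon
  push_neg at hcon
  obtain ⟨h1, h2⟩ := hcon
  rw [Finset.not_subset] at h1 h2
  obtain ⟨j, hji, hji'⟩ := h1
  obtain ⟨j', hj'i', hj'i⟩ := h2
  have hii' : i ≠ i' := by rintro rfl; exact hji' hji
  have hjj' : j ≠ j' := by rintro rfl; exact hj'i hji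
  rw [mem_rset] at hji hj'i'
  have hc : (i, j') ∉ F := fun h => hj'i (mem_rset.2 h)
  have hd : (i', j) ∉ F := fun h => hji' (mem_rset.2 h)
  have hab : ((i : ℤ), (j : ℤ)) ≠ (i', j') := fun h => hii' (congrArg Prod.fst h)
  have hcd : ((i : ℤ), (j' : ℤ)) ≠ (i', j) := fun h => hii' (congrArg Prod.fst h)
  set F' := insert ((i : ℤ), (j' : ℤ))
      (insert ((i' : ℤ), (j : ℤ)) ((F.erase (i, j)).erase (i', j'))) with hF'def
  have hrows : ∀ r, rowSum F' r = rowSum F r := by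
    intro r
    rw [rowSum, rowSum]
    congr 1
    exact card_filter_swap hji hj'i' hc hd hab hcd _ Iff.rfl Iff.rfl
  have hcols : ∀ r, colSum F' r = colSum F r := by
    intro r
    rw [colSum, colSum]
    congr 1
    rw [hF'def, Finset.insert_comm]
    exact card_filter_swap hji hj'i' hd hc hab (Ne.symm hcd) _ Iff.rfl Iff.rfl
  have heq := hud F' hrows hcols
  have : (i, j') ∈ F' := mem_insert_self _ _
  rw [heq] at this
  exact hc this

/-- Set of row sums of rows of `F` containing column `j`. -/
def capset (F : Finset (ℤ × ℤ)) (j : ℤ) : Finset ℤ :=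
  (F.filter fun p => p.2 = j).image fun p => rowSum F p.1

def cap (F : Finset (ℤ × ℤ)) (j : ℤ) : ℕ := (capset F j).card

lemma mem_capset {F : Finset (ℤ × ℤ)} {j v : ℤ} :
    v ∈ capset F j ↔ ∃ i, (i, j) ∈ F ∧ rowSum F i = v := by
  constructor
  · intro h
    simp only [capset, mem_image, mem_filter] at h
    obtain ⟨p, ⟨hpF, hp2⟩, hpv⟩ := h
    exact ⟨p.1, by rwa [show ((p.1 : ℤ), j) = p from Prod.ext rfl hp2.symm], hpv⟩
  · rintro ⟨i, hi, rfl⟩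
    simp only [capset, mem_image, mem_filter]
    exact ⟨(i, j), ⟨hi, rfl⟩, rfl⟩

lemma cap_succ_le {F : Finset (ℤ × ℤ)} (hud : uniquelyDetermined F) {i j p : ℤ}
    (hj : (i, j) ∈ F) (hp : (i, p) ∉ F) : cap F p + 1 ≤ cap F j := by
  have hsubmain : ∀ i'' : ℤ, (i'', p) ∈ F → rset F i ⊆ rset F i'' := by
    intro i'' h2
    rcases rset_nested hud i'' i with h | h
    · exact absurd (mem_rset.1 (h (mem_rset.2 h2))) hp
    · exact h
  have hsub : insert (rowSum F i) (capset F p) ⊆ capset F j := by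
    intro v hv
    rcases mem_insert.1 hv with rfl | hv
    · exact mem_capset.2 ⟨i, hj, rfl⟩
    · obtain ⟨i'', h2, rfl⟩ := mem_capset.1 hv
      exact mem_capset.2 ⟨i'', mem_rset.1 (hsubmain i'' h2 (mem_rset.2 hj)), rfl⟩
  have hnot : rowSum F i ∉ capset F p := by
    intro hv
    obtain ⟨i'', h2, heq⟩ := mem_capset.1 hv
    have hsub2 := hsubmain i'' h2
    have hcardle : (rset F i'').card ≤ (rset F i).card := by
      have := (card_rset F i'').trans (heq.trans (card_rset F i).symm)
      exact_mod_cast this.le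
    have heqset : rset F i = rset F i'' := Finset.eq_of_subset_of_card_le hsub2 hcardle
    exact hp (mem_rset.1 (heqset ▸ mem_rset.2 h2))
  calc cap F p + 1 = (insert (rowSum F i) (capset F p)).card :=
        (card_insert_of_notMem hnot).symm
    _ ≤ cap F j := card_le_card hsub

lemma sum_distinct_pos : ∀ (n : ℕ) (s : Finset ℤ), s.card = n → (∀ v ∈ s, (1:ℤ) ≤ v) →
    (n : ℤ) * (n + 1) ≤ 2 * ∑ v ∈ s, v := by
  intro n
  induction n with
  | zero =>
    intro s hs _
    rw [Finset.card_eq_zero.1 hs]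
    simp
  | succ n ih =>
    intro s hs hpos
    have hne : s.Nonempty := by rw [← Finset.card_pos, hs]; omega
    set M := s.max' hne with hMdef
    have hM : M ∈ s := s.max'_mem hne
    have hMpos : (1:ℤ) ≤ M := hpos M hM
    have hcard : (s.card : ℤ) ≤ M := by
      have hsub : s ⊆ Finset.Icc 1 M := fun v hv =>
        Finset.mem_Icc.2 ⟨hpos v hv, s.le_max' v hv⟩
      have h := Finset.card_le_card hsub
      rw [Int.card_Icc] at h
      omega
    have hce : (s.erase M).card = n := by rw [Finset.card_erase_of_mem hM, hs]; omega
    have herase := ih (s.erase M) hce (fun v hv => hpos v (Finset.mem_of_mem_erase hv))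
    have hsum : ∑ v ∈ s, v = M + ∑ v ∈ s.erase M, v :=
      (Finset.add_sum_erase s (fun v => v) hM).symm
    rw [hsum, hs] at *
    push_cast at *
    nlinarith [herase, hcard]

lemma sum_image_le' (s : Finset ℤ) (f : ℤ → ℤ) :
    (∀ i ∈ s, 0 ≤ f i) → ∑ v ∈ s.image f, v ≤ ∑ i ∈ s, f i := by
  induction s using Finset.induction_on with
  | empty => simp
  | @insert a s ha ih =>
    intro hf
    rw [Finset.image_insert, Finset.sum_insert ha]
    have hfa : 0 ≤ f a := hf a (mem_insert_self _ _)
    have ih' := ih (fun i hi => hf i (mem_insert_of_mem hi))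
    by_cases hmem : f a ∈ s.image f
    · rw [Finset.insert_eq_self.2 hmem]
      linarith
    · rw [Finset.sum_insert hmem]
      linarith

lemma colSum_nonneg (F : Finset (ℤ × ℤ)) (j : ℤ) : 0 ≤ colSum F j := by
  rw [colSum]; positivity

lemma rowSum_nonneg (F : Finset (ℤ × ℤ)) (i : ℤ) : 0 ≤ rowSum F i := by
  rw [rowSum]; positivity

lemma sum_rowSum {F : Finset (ℤ × ℤ)} {t : Finset ℤ} (ht : F.image Prod.fst ⊆ t) :
    ∑ i ∈ t, rowSum F i = (F.card : ℤ) := by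
  have h := Finset.card_eq_sum_card_fiberwise
    (f := Prod.fst) (s := F) (t := t) (fun x hx => ht (mem_image_of_mem _ hx))
  simp only [rowSum]
  rw [← Nat.cast_sum, ← h]

lemma sum_colSum {F : Finset (ℤ × ℤ)} {t : Finset ℤ} (ht : F.image Prod.snd ⊆ t) :
    ∑ j ∈ t, colSum F j = (F.card : ℤ) := by
  have h := Finset.card_eq_sum_card_fiberwise
    (f := Prod.snd) (s := F) (t := t) (fun x hx => ht (mem_image_of_mem _ hx))
  simp only [colSum]
  rw [← Nat.cast_sum, ← h]

lemma colSum_eq_zero {F : Finset (ℤ × ℤ)} {j : ℤ} (h : j ∉ F.image Prod.snd) :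
    colSum F j = 0 := by
  rw [colSum]
  have : F.filter (fun p => p.2 = j) = ∅ :=
    Finset.filter_eq_empty_iff.2 (fun {q} hq hq2 => h (hq2 ▸ mem_image_of_mem _ hq))
  rw [this]
  simp

lemma card_eq_of_rowSums {F1 F2 : Finset (ℤ × ℤ)} (h : ∀ i, rowSum F1 i = rowSum F2 i) :
    F1.card = F2.card := by
  have h1 := sum_rowSum (F := F1) (t := (F1 ∪ F2).image Prod.fst)
    (image_subset_image subset_union_left)
  have h2 := sum_rowSum (F := F2) (t := (F1 ∪ F2).image Prod.fst)
    (image_subset_image subset_union_right)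
  have : (F1.card : ℤ) = (F2.card : ℤ) := by
    rw [← h1, ← h2]
    exact Finset.sum_congr rfl (fun i _ => h i)
  exact_mod_cast this

lemma cap_mul_le (F : Finset (ℤ × ℤ)) (j : ℤ) :
    (cap F j : ℤ) * (cap F j + 1) ≤ 2 * F.card := by
  have hpos : ∀ v ∈ capset F j, (1:ℤ) ≤ v := by
    intro v hv
    obtain ⟨i, hi, rfl⟩ := mem_capset.1 hv
    rw [rowSum]
    have hmem : (i, j) ∈ F.filter fun p => p.1 = i := mem_filter.2 ⟨hi, rfl⟩
    exact_mod_cast Finset.card_pos.2 ⟨_, hmem⟩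
  have h1 := sum_distinct_pos (cap F j) (capset F j) rfl hpos
  have hcs : capset F j = ((F.filter fun p => p.2 = j).image Prod.fst).image (rowSum F) := by
    rw [capset, Finset.image_image]
    rfl
  have h2 : ∑ v ∈ capset F j, v ≤ (F.card : ℤ) := by
    rw [hcs]
    calc ∑ v ∈ ((F.filter fun p => p.2 = j).image Prod.fst).image (rowSum F), v
        ≤ ∑ i ∈ (F.filter fun p => p.2 = j).image Prod.fst, rowSum F i :=
          sum_image_le' _ _ (fun i _ => rowSum_nonneg F i)
      _ ≤ ∑ i ∈ F.image Prod.fst, rowSum F i := by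
          apply Finset.sum_le_sum_of_subset_of_nonneg
          · exact image_subset_image (filter_subset _ _)
          · exact fun i _ _ => rowSum_nonneg F i
      _ = (F.card : ℤ) := sum_rowSum (le_refl _)
  calc (cap F j : ℤ) * (cap F j + 1) ≤ 2 * ∑ v ∈ capset F j, v := h1
    _ ≤ 2 * F.card := by linarith

lemma psi_nonneg (F1 F2 : Finset (ℤ × ℤ)) :
    (0:ℤ) ≤ ∑ j ∈ F1.image Prod.snd,
      max (colSum F1 j - colSum F2 j) 0 * (cap F1 j : ℤ) :=
  Finset.sum_nonneg fun j _ => mul_nonneg (le_max_right _ _) (by positivity)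

lemma key (F1 : Finset (ℤ × ℤ)) (hud : uniquelyDetermined F1) :
    ∀ (N : ℕ) (F2 : Finset (ℤ × ℤ)), (F2 \ F1).card ≤ N →
      (∀ i, rowSum F1 i = rowSum F2 i) →
      ((F2 \ F1).card : ℤ) ≤
        ∑ j ∈ F1.image Prod.snd, max (colSum F1 j - colSum F2 j) 0 * (cap F1 j : ℤ) := by
  intro N
  induction N with
  | zero =>
    intro F2 hle _
    rw [Nat.le_zero.1 hle]
    exact psi_nonneg F1 F2
  | succ N ih =>
    intro F2 hle hrow
    by_cases hzero : (F2 \ F1).card = 0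
    · rw [hzero]; exact psi_nonneg F1 F2
    have hcards : F1.card = F2.card := card_eq_of_rowSums hrow
    -- there exists a column where F2 is deficient
    have hexj : ∃ j, colSum F2 j < colSum F1 j := by
      by_contra hno
      push_neg at hno
      have hcols : ∀ j, colSum F2 j = colSum F1 j := by
        have h1 : ∑ j ∈ (F1 ∪ F2).image Prod.snd, colSum F1 j = (F1.card : ℤ) :=
          sum_colSum (image_subset_image subset_union_left)
        have h2 : ∑ j ∈ (F1 ∪ F2).image Prod.snd, colSum F2 j = (F2.card : ℤ) :=
          sum_colSum (image_subset_image subset_union_right)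
        have hzero' : ∑ j ∈ (F1 ∪ F2).image Prod.snd, (colSum F2 j - colSum F1 j) = 0 := by
          rw [Finset.sum_sub_distrib, h1, h2, hcards]
          ring
        have hall := (Finset.sum_eq_zero_iff_of_nonneg
          (fun j _ => sub_nonneg.2 (hno j))).1 hzero'
        intro j
        by_cases hjt : j ∈ (F1 ∪ F2).image Prod.snd
        · have := hall j hjt; linarith
        · rw [colSum_eq_zero (fun h => hjt (image_subset_image subset_union_right h)),
            colSum_eq_zero (fun h => hjt (image_subset_image subset_union_left h))]
      have heq := hud F2 (fun i => (hrow i).symm) hcols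
      rw [heq] at hzero
      simp at hzero
    obtain ⟨jstar, hjstar⟩ := hexj
    -- a hole (i, jstar) ∈ F1 \ F2
    have hexhole : ∃ i, (i, jstar) ∈ F1 ∧ (i, jstar) ∉ F2 := by
      by_contra hno
      push_neg at hno
      have hsub : F1.filter (fun p => p.2 = jstar) ⊆ F2.filter (fun p => p.2 = jstar) := by
        intro q hq
        rw [mem_filter] at hq ⊢
        have hq' : ((q.1 : ℤ), jstar) = q := Prod.ext rfl hq.2.symm
        exact ⟨hq' ▸ hno q.1 (hq' ▸ hq.1), hq.2⟩
      have hc := Finset.card_le_card hsub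
      rw [colSum, colSum] at hjstar
      omega
    obtain ⟨i, hiF1, hiF2⟩ := hexhole
    -- an excess (i, p) ∈ F2 \ F1 in the same row
    have hexcess : ∃ p, (i, p) ∈ F2 ∧ (i, p) ∉ F1 := by
      by_contra hno
      push_neg at hno
      have hsub : F2.filter (fun q => q.1 = i) ⊆ F1.filter (fun q => q.1 = i) := by
        intro q hq
        rw [mem_filter] at hq ⊢
        have hq' : ((i : ℤ), (q.2 : ℤ)) = q := Prod.ext hq.2.symm rfl
        exact ⟨hq' ▸ hno q.2 (hq' ▸ hq.1), hq.2⟩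
      have hcle : (F1.filter (fun q => q.1 = i)).card ≤ (F2.filter (fun q => q.1 = i)).card := by
        have := hrow i
        rw [rowSum, rowSum] at this
        omega
      have heq := Finset.eq_of_subset_of_card_le hsub hcle
      have : (i, jstar) ∈ F2.filter (fun q => q.1 = i) := by
        rw [heq]; exact mem_filter.2 ⟨hiF1, rfl⟩
      exact hiF2 (mem_filter.1 this).1
    -- choose the excess column p
    obtain ⟨p, hpF2, hpF1, hpc⟩ :
        ∃ p, (i, p) ∈ F2 ∧ (i, p) ∉ F1 ∧
          (colSum F1 p < colSum F2 p ∨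
            (colSum F2 p ≤ colSum F1 p ∧ p ∈ F1.image Prod.snd)) := by
      by_cases hcase : ∃ p, (i, p) ∈ F2 ∧ (i, p) ∉ F1 ∧ colSum F1 p < colSum F2 p
      · obtain ⟨p, h1, h2, h3⟩ := hcase
        exact ⟨p, h1, h2, Or.inl h3⟩
      · push_neg at hcase
        obtain ⟨p, h1, h2⟩ := hexcess
        have h3 := hcase p h1 h2
        refine ⟨p, h1, h2, Or.inr ⟨h3, ?_⟩⟩
        have hc2 : (1:ℤ) ≤ colSum F2 p := by
          have hm : ((i:ℤ), (p:ℤ)) ∈ F2.filter (fun q => q.2 = p) := mem_filter.2 ⟨h1, rfl⟩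
          rw [colSum]
          exact_mod_cast Finset.card_pos.2 ⟨_, hm⟩
        have hc1 : (1:ℤ) ≤ colSum F1 p := le_trans hc2 h3
        rw [colSum] at hc1
        have hne : (F1.filter fun q => q.2 = p).Nonempty := by
          rw [← Finset.card_pos]; omega
        obtain ⟨q, hq⟩ := hne
        rw [mem_filter] at hq
        exact hq.2 ▸ mem_image_of_mem _ hq.1
    have hpjs : p ≠ jstar := fun h => hpF1 (h ▸ hiF1)
    set F2' := insert ((i : ℤ), (jstar : ℤ)) (F2.erase (i, p)) with hF2'def
    -- row sums are preserved
    have hrow' : ∀ r, rowSum F2' r = rowSum F2 r := by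
      intro r
      rw [rowSum, rowSum, hF2'def, filter_insert, filter_erase]
      by_cases hir : i = r
      · rw [if_pos (show ((i:ℤ), (jstar:ℤ)).1 = r from hir)]
        have hm : (i, p) ∈ F2.filter (fun q => q.1 = r) := mem_filter.2 ⟨hpF2, hir⟩
        have hnm : ((i:ℤ), (jstar:ℤ)) ∉ (F2.filter (fun q => q.1 = r)).erase (i, p) :=
          fun h => hiF2 (mem_filter.1 (mem_of_mem_erase h)).1
        rw [card_insert_of_notMem hnm, card_erase_of_mem hm]
        have h1 : 1 ≤ (F2.filter (fun q => q.1 = r)).card := card_pos.2 ⟨_, hm⟩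
        omega
      · have hnm : ((i:ℤ), (p:ℤ)) ∉ F2.filter (fun q => q.1 = r) :=
          fun h => hir ((mem_filter.1 h).2)
        rw [if_neg (show ¬ ((i:ℤ), (jstar:ℤ)).1 = r from hir),
          erase_eq_of_notMem hnm]
    -- column sums
    have hcol_js : colSum F2' jstar = colSum F2 jstar + 1 := by
      have hnm1 : ((i:ℤ), (p:ℤ)) ∉ F2.filter (fun q => q.2 = jstar) :=
        fun h => hpjs ((mem_filter.1 h).2)
      have hnm2 : ((i:ℤ), (jstar:ℤ)) ∉ F2.filter (fun q => q.2 = jstar) :=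
        fun h => hiF2 (mem_filter.1 h).1
      rw [colSum, colSum, hF2'def, filter_insert, filter_erase,
        if_pos (show ((i:ℤ), (jstar:ℤ)).2 = jstar from rfl),
        erase_eq_of_notMem hnm1, card_insert_of_notMem hnm2]
      push_cast
      ring
    have hcol_p : colSum F2' p = colSum F2 p - 1 := by
      have hm : (i, p) ∈ F2.filter (fun q => q.2 = p) := mem_filter.2 ⟨hpF2, rfl⟩
      have h1 : 1 ≤ (F2.filter (fun q => q.2 = p)).card := card_pos.2 ⟨_, hm⟩
      rw [colSum, colSum, hF2'def, filter_insert, filter_erase,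
        if_neg (show ¬ ((i:ℤ), (jstar:ℤ)).2 = p from fun h => hpjs h.symm),
        card_erase_of_mem hm]
      omega
    have hcol_other : ∀ q, q ≠ jstar → q ≠ p → colSum F2' q = colSum F2 q := by
      intro q hq1 hq2
      have hnm : ((i:ℤ), (p:ℤ)) ∉ F2.filter (fun x => x.2 = q) :=
        fun h => hq2 ((mem_filter.1 h).2).symm
      rw [colSum, colSum, hF2'def, filter_insert, filter_erase,
        if_neg (show ¬ ((i:ℤ), (jstar:ℤ)).2 = q from fun h => hq1 h.symm),
        erase_eq_of_notMem hnm]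
    -- the difference shrinks
    have hsdiff : F2' \ F1 = (F2 \ F1).erase (i, p) := by
      ext x
      simp only [hF2'def, mem_sdiff, mem_insert, mem_erase]
      constructor
      · rintro ⟨(rfl | ⟨hne, hxF2⟩), hxF1⟩
        · exact absurd hiF1 hxF1
        · exact ⟨hne, hxF2, hxF1⟩
      · rintro ⟨hne, hxF2, hxF1⟩
        exact ⟨Or.inr ⟨hne, hxF2⟩, hxF1⟩
    have hmemd : (i, p) ∈ F2 \ F1 := mem_sdiff.2 ⟨hpF2, hpF1⟩
    have hcard' : (F2' \ F1).card = (F2 \ F1).card - 1 := by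
      rw [hsdiff, card_erase_of_mem hmemd]
    have hcard1 : 1 ≤ (F2 \ F1).card := Nat.pos_of_ne_zero hzero
    have hIH := ih F2' (by omega) (fun r => (hrow r).trans (hrow' r).symm)
    -- compare the two potentials
    have hjt : jstar ∈ F1.image Prod.snd := mem_image_of_mem _ hiF1
    have hcapjs : 1 ≤ (cap F1 jstar : ℤ) := by
      have : (capset F1 jstar).Nonempty := ⟨_, mem_capset.2 ⟨i, hiF1, rfl⟩⟩
      rw [← Finset.card_pos] at this
      exact_mod_cast this
    have hD : 1 ≤ colSum F1 jstar - colSum F2 jstar := by omega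
    have hpsi : (∑ j ∈ F1.image Prod.snd,
          max (colSum F1 j - colSum F2' j) 0 * (cap F1 j : ℤ)) + 1 ≤
        ∑ j ∈ F1.image Prod.snd,
          max (colSum F1 j - colSum F2 j) 0 * (cap F1 j : ℤ) := by
      rcases hpc with hlt | ⟨hge, hpt⟩
      · -- terms agree off jstar
        rw [← Finset.add_sum_erase _ _ hjt, ← Finset.add_sum_erase _ _ hjt]
        have hsame : ∑ j ∈ (F1.image Prod.snd).erase jstar,
              max (colSum F1 j - colSum F2' j) 0 * (cap F1 j : ℤ) =
            ∑ j ∈ (F1.image Prod.snd).erase jstar,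
              max (colSum F1 j - colSum F2 j) 0 * (cap F1 j : ℤ) := by
          apply Finset.sum_congr rfl
          intro j hj
          have hjne := (mem_erase.1 hj).1
          by_cases hjp : j = p
          · subst hjp
            rw [hcol_p]
            rw [max_eq_right (by omega), max_eq_right (by omega)]
          · rw [hcol_other j hjne hjp]
        rw [hsame, hcol_js]
        rw [max_eq_left (by omega), max_eq_left (by omega)]
        nlinarith [hcapjs, hD]
      · -- both jstar and p change
        have hpt' : p ∈ (F1.image Prod.snd).erase jstar := mem_erase.2 ⟨hpjs, hpt⟩
        rw [← Finset.add_sum_erase _ _ hjt, ← Finset.add_sum_erase _ _ hjt,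
          ← Finset.add_sum_erase _ _ hpt', ← Finset.add_sum_erase _ _ hpt']
        have hsame : ∑ j ∈ ((F1.image Prod.snd).erase jstar).erase p,
              max (colSum F1 j - colSum F2' j) 0 * (cap F1 j : ℤ) =
            ∑ j ∈ ((F1.image Prod.snd).erase jstar).erase p,
              max (colSum F1 j - colSum F2 j) 0 * (cap F1 j : ℤ) := by
          apply Finset.sum_congr rfl
          intro j hj
          rw [hcol_other j (mem_erase.1 (mem_of_mem_erase hj)).1 (mem_erase.1 hj).1]
        rw [hsame, hcol_js, hcol_p]
        have hcap2 := cap_succ_le hud hiF1 hpF1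
        have hcap2' : (cap F1 p : ℤ) + 1 ≤ (cap F1 jstar : ℤ) := by exact_mod_cast hcap2
        rw [max_eq_left (by omega), max_eq_left (by omega),
          max_eq_left (by omega), max_eq_left (by omega)]
        nlinarith [hcap2', hD, hge]
    have hcast : ((F2 \ F1).card : ℤ) = ((F2' \ F1).card : ℤ) + 1 := by
      rw [hcard']
      omega
    rw [hcast]
    linarith [hIH, hpsi]

lemma two_mul_max_sum {F1 F2 : Finset (ℤ × ℤ)} (hrow : ∀ i, rowSum F1 i = rowSum F2 i) :
    2 * ∑ j ∈ F1.image Prod.snd, max (colSum F1 j - colSum F2 j) 0 = lineDiff F2 F1 := by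
  have hcards : F1.card = F2.card := card_eq_of_rowSums hrow
  have hrowpart : ∑ i ∈ (F2 ∪ F1).image Prod.fst, |rowSum F2 i - rowSum F1 i| = 0 :=
    Finset.sum_eq_zero (fun i _ => by rw [← hrow i, sub_self, abs_zero])
  have hsub : F1.image Prod.snd ⊆ (F2 ∪ F1).image Prod.snd :=
    image_subset_image subset_union_right
  have hext : ∑ j ∈ F1.image Prod.snd, max (colSum F1 j - colSum F2 j) 0
      = ∑ j ∈ (F2 ∪ F1).image Prod.snd, max (colSum F1 j - colSum F2 j) 0 := by
    apply Finset.sum_subset hsub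
    intro j _ hjt
    rw [colSum_eq_zero hjt, max_eq_right (by linarith [colSum_nonneg F2 j])]
  have hsum1 : ∑ j ∈ (F2 ∪ F1).image Prod.snd, colSum F1 j = (F1.card : ℤ) :=
    sum_colSum (image_subset_image subset_union_right)
  have hsum2 : ∑ j ∈ (F2 ∪ F1).image Prod.snd, colSum F2 j = (F2.card : ℤ) :=
    sum_colSum (image_subset_image subset_union_left)
  rw [lineDiff, hrowpart, add_zero, hext, Finset.mul_sum]
  have hpt : ∀ j ∈ (F2 ∪ F1).image Prod.snd,
      2 * max (colSum F1 j - colSum F2 j) 0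
        = |colSum F2 j - colSum F1 j| + (colSum F1 j - colSum F2 j) := by
    intro j _
    rw [abs_sub_comm]
    rcases le_or_gt (colSum F1 j - colSum F2 j) 0 with h | h
    · rw [max_eq_right h, abs_of_nonpos h]; ring
    · rw [max_eq_left h.le, abs_of_pos h]; ring
  rw [Finset.sum_congr rfl hpt, Finset.sum_add_distrib, Finset.sum_sub_distrib,
    hsum1, hsum2, hcards]
  ring

lemma sdiff_bound {F1 F2 : Finset (ℤ × ℤ)} (hud : uniquelyDetermined F1)
    (hrow : ∀ i, rowSum F1 i = rowSum F2 i) :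
    ((F2 \ F1).card : ℝ) ≤ alpha F2 F1 * (Real.sqrt 2 * Real.sqrt F2.card) := by
  have hkey := key F1 hud (F2 \ F1).card F2 le_rfl hrow
  have hcards : F1.card = F2.card := card_eq_of_rowSums hrow
  set K := Real.sqrt 2 * Real.sqrt F2.card with hK
  have hcap : ∀ j, (cap F1 j : ℝ) ≤ K := by
    intro j
    have h1 := cap_mul_le F1 j
    rw [hcards] at h1
    rw [hK, ← Real.sqrt_mul (by norm_num : (0:ℝ) ≤ 2),
      Real.le_sqrt (by positivity) (by positivity), sq]
    have h2 : (cap F1 j : ℤ) * (cap F1 j) ≤ 2 * F2.card := by nlinarith [h1]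
    exact_mod_cast h2
  have hmono : ((F2 \ F1).card : ℝ) ≤ ∑ j ∈ F1.image Prod.snd,
      ((max (colSum F1 j - colSum F2 j) 0 : ℤ) : ℝ) * (cap F1 j : ℝ) := by
    exact_mod_cast hkey
  have hstep : ∑ j ∈ F1.image Prod.snd,
        ((max (colSum F1 j - colSum F2 j) 0 : ℤ) : ℝ) * (cap F1 j : ℝ)
      ≤ (∑ j ∈ F1.image Prod.snd, ((max (colSum F1 j - colSum F2 j) 0 : ℤ) : ℝ)) * K := by
    rw [Finset.sum_mul]
    apply Finset.sum_le_sum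
    intro j _
    have hnn : (0:ℝ) ≤ ((max (colSum F1 j - colSum F2 j) 0 : ℤ) : ℝ) := by
      exact_mod_cast le_max_right (colSum F1 j - colSum F2 j) 0
    exact mul_le_mul_of_nonneg_left (hcap j) hnn
  have halpha : (∑ j ∈ F1.image Prod.snd,
      ((max (colSum F1 j - colSum F2 j) 0 : ℤ) : ℝ)) = alpha F2 F1 := by
    rw [alpha, ← two_mul_max_sum hrow]
    push_cast
    ring
  calc ((F2 \ F1).card : ℝ) ≤ _ := hmono
    _ ≤ _ := hstep
    _ = alpha F2 F1 * K := by rw [halpha]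

lemma lineDiff_congr {F1 F2 F3 : Finset (ℤ × ℤ)}
    (hrow12 : ∀ i, rowSum F1 i = rowSum F2 i) (hrow13 : ∀ i, rowSum F1 i = rowSum F3 i)
    (hcols : ∀ j, colSum F3 j = colSum F2 j) :
    lineDiff F3 F1 = lineDiff F2 F1 := by
  rw [lineDiff, lineDiff]
  have hr3 : ∑ i ∈ (F3 ∪ F1).image Prod.fst, |rowSum F3 i - rowSum F1 i| = 0 :=
    Finset.sum_eq_zero fun i _ => by rw [← hrow13 i, sub_self, abs_zero]
  have hr2 : ∑ i ∈ (F2 ∪ F1).image Prod.fst, |rowSum F2 i - rowSum F1 i| = 0 :=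
    Finset.sum_eq_zero fun i _ => by rw [← hrow12 i, sub_self, abs_zero]
  rw [hr3, hr2, add_zero, add_zero]
  set U := ((F3 ∪ F1).image Prod.snd) ∪ ((F2 ∪ F1).image Prod.snd) with hU
  have e1 : ∑ j ∈ (F3 ∪ F1).image Prod.snd, |colSum F3 j - colSum F1 j|
      = ∑ j ∈ U, |colSum F3 j - colSum F1 j| := by
    apply Finset.sum_subset subset_union_left
    intro j _ hnj
    rw [colSum_eq_zero (fun h => hnj (image_subset_image subset_union_left h)),
      colSum_eq_zero (fun h => hnj (image_subset_image subset_union_right h)),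
      sub_self, abs_zero]
  have e2 : ∑ j ∈ (F2 ∪ F1).image Prod.snd, |colSum F2 j - colSum F1 j|
      = ∑ j ∈ U, |colSum F2 j - colSum F1 j| := by
    apply Finset.sum_subset subset_union_right
    intro j _ hnj
    rw [colSum_eq_zero (fun h => hnj (image_subset_image subset_union_left h)),
      colSum_eq_zero (fun h => hnj (image_subset_image subset_union_right h)),
      sub_self, abs_zero]
  rw [e1, e2]
  exact Finset.sum_congr rfl fun j _ => by rw [hcols j]

/-- If nonempty sets `F2` and `F3` have the same line sums and `F1` is a uniquely
determined neighbour of `F2`, then with `α = α(F2, F1)` we have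
`|F2 ∩ F3| / |F2| ≥ 1 − 2√2·α / √|F2|`. -/
theorem inter_card_ratio_ge_of_eq_lineSums (F2 F3 F1 : Finset (ℤ × ℤ))
    (hF2 : F2.Nonempty) (hF3 : F3.Nonempty)
    (hrows : ∀ i, rowSum F2 i = rowSum F3 i) (hcols : ∀ j, colSum F2 j = colSum F3 j)
    (hnb : udNeighbour F1 F2) :
    1 - 2 * Real.sqrt 2 * alpha F2 F1 / Real.sqrt F2.card ≤
      ((F2 ∩ F3).card : ℝ) / F2.card := by
  obtain ⟨hud, hrow12, -⟩ := hnb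
  have hrow13 : ∀ i, rowSum F1 i = rowSum F3 i := fun i => (hrow12 i).trans (hrows i)
  have hb2 := sdiff_bound hud hrow12
  have hb3 := sdiff_bound hud hrow13
  have hc12 : F1.card = F2.card := card_eq_of_rowSums hrow12
  have hc13 : F1.card = F3.card := card_eq_of_rowSums hrow13
  have halpha : alpha F3 F1 = alpha F2 F1 := by
    rw [alpha, alpha, lineDiff_congr hrow12 hrow13 (fun j => (hcols j).symm)]
  rw [halpha] at hb3
  have hc23 : F2.card = F3.card := hc12 ▸ hc13
  rw [← hc23] at hb3
  -- counting
  have hkey1 : F2.card ≤ (F2 ∩ F3).card + ((F2 \ F1).card + (F3 \ F1).card) := by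
    have h1 : (F2 \ F3) ⊆ (F2 \ F1) ∪ (F1 \ F3) := by
      intro x hx
      rw [mem_sdiff] at hx
      by_cases hxF1 : x ∈ F1
      · exact mem_union_right _ (mem_sdiff.2 ⟨hxF1, hx.2⟩)
      · exact mem_union_left _ (mem_sdiff.2 ⟨hx.1, hxF1⟩)
    have h2 : (F2 \ F3).card ≤ (F2 \ F1).card + (F1 \ F3).card :=
      le_trans (card_le_card h1) (card_union_le _ _)
    have h3 : (F1 \ F3).card = (F3 \ F1).card := by
      have e1 := Finset.card_sdiff_add_card_inter F1 F3
      have e2 := Finset.card_sdiff_add_card_inter F3 F1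
      have e3 : (F1 ∩ F3).card = (F3 ∩ F1).card := by rw [Finset.inter_comm]
      omega
    have h4 := Finset.card_inter_add_card_sdiff F2 F3
    omega
  have hN : (0:ℝ) < (F2.card : ℝ) := by
    exact_mod_cast Finset.card_pos.2 hF2
  have hsN : (0:ℝ) < Real.sqrt (F2.card : ℝ) := Real.sqrt_pos.2 hN
  rw [le_div_iff₀ hN]
  have hchain : (F2.card : ℝ) - 2 * alpha F2 F1 * (Real.sqrt 2 * Real.sqrt F2.card)
      ≤ ((F2 ∩ F3).card : ℝ) := by
    have hcast : (F2.card : ℝ) ≤ ((F2 ∩ F3).card : ℝ)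
        + (((F2 \ F1).card : ℝ) + ((F3 \ F1).card : ℝ)) := by
      exact_mod_cast hkey1
    linarith [hb2, hb3]
  have hdiv : Real.sqrt (F2.card : ℝ) * Real.sqrt (F2.card : ℝ) = (F2.card : ℝ) :=
    Real.mul_self_sqrt hN.le
  have halg : (1 - 2 * Real.sqrt 2 * alpha F2 F1 / Real.sqrt (F2.card : ℝ)) * (F2.card : ℝ)
      = (F2.card : ℝ) - 2 * alpha F2 F1 * (Real.sqrt 2 * Real.sqrt (F2.card : ℝ)) := by
    have h1 : (F2.card : ℝ) / Real.sqrt (F2.card : ℝ) = Real.sqrt (F2.card : ℝ) :=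
      Real.div_sqrt
    calc (1 - 2 * Real.sqrt 2 * alpha F2 F1 / Real.sqrt (F2.card : ℝ)) * (F2.card : ℝ)
        = (F2.card : ℝ) - 2 * Real.sqrt 2 * alpha F2 F1
            * ((F2.card : ℝ) / Real.sqrt (F2.card : ℝ)) := by ring
      _ = (F2.card : ℝ) - 2 * Real.sqrt 2 * alpha F2 F1 * Real.sqrt (F2.card : ℝ) := by
          rw [h1]
      _ = (F2.card : ℝ) - 2 * alpha F2 F1 * (Real.sqrt 2 * Real.sqrt (F2.card : ℝ)) := by
          ring
  rw [halg]
  exact hchain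
end

section
/- Let F2 and F3 be finite subsets of ℤ² with the same row sums and the same column sums, and suppose F2 and F3 are disjoint. Let F1 be a uniquely determined neighbour of F2 and put α = α(F2, F1). Then |F2| ≤ 8α². -/
open Finset

lemma rowSum_eq_sum (G : Finset (ℤ × ℤ)) (i : ℤ) :
    rowSum G i = ∑ x ∈ G, if x.1 = i then (1:ℤ) else 0 := by
  rw [rowSum, Finset.card_filter]; push_cast; rfl

lemma colSum_eq_sum (G : Finset (ℤ × ℤ)) (j : ℤ) :
    colSum G j = ∑ x ∈ G, if x.2 = j then (1:ℤ) else 0 := by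
  rw [colSum, Finset.card_filter]; push_cast; rfl

lemma sum_colSum_filter (G : Finset (ℤ × ℤ)) (C : Finset ℤ) :
    ∑ j ∈ C, colSum G j = ((G.filter fun x => x.2 ∈ C).card : ℤ) := by
  rw [Finset.card_filter]
  push_cast
  simp only [colSum_eq_sum]
  rw [Finset.sum_comm]
  refine Finset.sum_congr rfl fun x hx => ?_
  rw [Finset.sum_ite_eq C x.2 (fun _ => (1:ℤ))]

lemma sum_rowSum_filter (G : Finset (ℤ × ℤ)) (R : Finset ℤ) :
    ∑ i ∈ R, rowSum G i = ((G.filter fun x => x.1 ∈ R).card : ℤ) := by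
  rw [Finset.card_filter]
  push_cast
  simp only [rowSum_eq_sum]
  rw [Finset.sum_comm]
  refine Finset.sum_congr rfl fun x hx => ?_
  rw [Finset.sum_ite_eq R x.1 (fun _ => (1:ℤ))]

lemma switch_sum (F : Finset (ℤ × ℤ)) (p q a b : ℤ) (w : ℤ × ℤ → ℤ)
    (hpa : (p,a) ∈ F) (hqb : (q,b) ∈ F) (hpb : (p,b) ∉ F) (hqa : (q,a) ∉ F)
    (hpq : p ≠ q) :
    ∑ x ∈ insert (p,b) (insert (q,a) ((F.erase (p,a)).erase (q,b))), w x
      = ∑ x ∈ F, w x - w (p,a) - w (q,b) + w (p,b) + w (q,a) := by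
  have h1 : (q,a) ∉ (F.erase (p,a)).erase (q,b) := fun h =>
    hqa (Finset.mem_of_mem_erase (Finset.mem_of_mem_erase h))
  have h2 : (p,b) ∉ insert (q,a) ((F.erase (p,a)).erase (q,b)) := by
    simp only [Finset.mem_insert]
    rintro (h | h)
    · exact hpq (congrArg Prod.fst h)
    · exact hpb (Finset.mem_of_mem_erase (Finset.mem_of_mem_erase h))
  have hqb' : (q,b) ∈ F.erase (p,a) := Finset.mem_erase.mpr
    ⟨fun h => hpq (congrArg Prod.fst h).symm, hqb⟩
  rw [Finset.sum_insert h2, Finset.sum_insert h1,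
      Finset.sum_erase_eq_sub hqb', Finset.sum_erase_eq_sub hpa]
  ring

lemma not_unique_of_switch (F : Finset (ℤ × ℤ)) (p q a b : ℤ)
    (hpa : (p,a) ∈ F) (hqb : (q,b) ∈ F) (hpb : (p,b) ∉ F) (hqa : (q,a) ∉ F)
    (hpq : p ≠ q) : ¬ uniquelyDetermined F := by
  intro hu
  set F' := insert (p,b) (insert (q,a) ((F.erase (p,a)).erase (q,b))) with hF'
  have hrow : ∀ i, rowSum F' i = rowSum F i := by
    intro i
    rw [rowSum_eq_sum, rowSum_eq_sum, hF',
      switch_sum F p q a b _ hpa hqb hpb hqa hpq]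
    simp only []
    ring
  have hcol : ∀ j, colSum F' j = colSum F j := by
    intro j
    rw [colSum_eq_sum, colSum_eq_sum, hF',
      switch_sum F p q a b _ hpa hqb hpb hqa hpq]
    simp only []
    ring
  have hmem : (p,b) ∈ F' := Finset.mem_insert_self _ _
  rw [hu F' hrow hcol] at hmem
  exact hpb hmem

set_option maxHeartbeats 1600000 in
/-- If `F2` and `F3` are disjoint sets with the same line sums and `F1` is a uniquely
determined neighbour of `F2`, then with `α = α(F2, F1)` we have `|F2| ≤ 8α²`. -/
theorem card_le_of_disjoint (F2 F3 F1 : Finset (ℤ × ℤ))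
    (hrows : ∀ i, rowSum F2 i = rowSum F3 i) (hcols : ∀ j, colSum F2 j = colSum F3 j)
    (hdisj : Disjoint F2 F3) (hnb : udNeighbour F1 F2) :
    (F2.card : ℝ) ≤ 8 * (alpha F2 F1) ^ 2 := by
  obtain ⟨hud, hrow1, n, hs2, hs1, σ, hsort2, hsort1⟩ := hnb
  rcases F2.eq_empty_or_nonempty with hF2e | hF2ne
  · subst hF2e
    simp only [Finset.card_empty, Nat.cast_zero]
    positivity
  set e : Fin n → ℤ := fun k => ((σ k : ℕ) : ℤ) + 1 with he
  have hicc : ∀ b : ℤ, 1 ≤ b → b ≤ (n:ℤ) → ∃ k : Fin n, e k = b := by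
    intro b h1 h2
    have hn : (b - 1).toNat < n := by omega
    refine ⟨σ.symm ⟨(b-1).toNat, hn⟩, ?_⟩
    simp only [he, Equiv.apply_symm_apply]
    omega
  have einj : Function.Injective e := by
    intro k l h
    simp only [he] at h
    have : (σ k : ℕ) = (σ l : ℕ) := by omega
    exact σ.injective (Fin.val_injective this)
  have hmemcol : ∀ (G : Finset (ℤ×ℤ)), (∀ j, (j < 1 ∨ (n:ℤ) < j) → colSum G j = 0) →
      ∀ x ∈ G, 1 ≤ x.2 ∧ x.2 ≤ (n:ℤ) := by
    intro G hG x hx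
    by_contra h
    have h0 : colSum G x.2 = 0 := hG _ (by omega)
    have h1 : 0 < colSum G x.2 := by
      have hne : (G.filter fun p => p.2 = x.2).Nonempty := ⟨x, Finset.mem_filter.mpr ⟨hx, rfl⟩⟩
      have := Finset.card_pos.mpr hne
      rw [colSum]; exact_mod_cast this
    omega
  set R : Finset ℤ := F2.image Prod.fst with hR
  have hrowF2 : ∀ x ∈ F2, x.1 ∈ R := fun x hx => Finset.mem_image_of_mem _ hx
  have hRpos : ∀ i ∈ R, 1 ≤ rowSum F2 i := by
    intro i hi
    obtain ⟨x, hx, hx1⟩ := Finset.mem_image.mp hi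
    have hne : (F2.filter fun p => p.1 = i).Nonempty := ⟨x, Finset.mem_filter.mpr ⟨hx, hx1⟩⟩
    have := Finset.card_pos.mpr hne
    rw [rowSum]; exact_mod_cast this
  have hrowsub : ∀ (G : Finset (ℤ×ℤ)), (∀ i, rowSum G i = rowSum F2 i) →
      ∀ x ∈ G, x.1 ∈ R := by
    intro G hG x hx
    have h1 : 0 < rowSum G x.1 := by
      have hne : (G.filter fun p => p.1 = x.1).Nonempty := ⟨x, Finset.mem_filter.mpr ⟨hx, rfl⟩⟩
      have := Finset.card_pos.mpr hne
      rw [rowSum]; exact_mod_cast this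
    rw [hG, rowSum] at h1
    have h2 : (F2.filter fun p => p.1 = x.1).Nonempty := by
      rw [← Finset.card_pos]; exact_mod_cast h1
    obtain ⟨y, hy⟩ := h2
    obtain ⟨hy1, hy2⟩ := Finset.mem_filter.mp hy
    exact Finset.mem_image.mpr ⟨y, hy1, hy2⟩
  have hrowsubF1 := hrowsub F1 hrow1
  have hrowsubF3 := hrowsub F3 (fun i => (hrows i).symm)
  have hsum_card : ∀ (G : Finset (ℤ×ℤ)), (∀ x ∈ G, x.1 ∈ R) →
      ∑ i ∈ R, rowSum G i = (G.card : ℤ) := by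
    intro G hG
    rw [sum_rowSum_filter, Finset.filter_true_of_mem hG]
  have hcard12 : (F1.card : ℤ) = (F2.card : ℤ) := by
    rw [← hsum_card F1 hrowsubF1, ← hsum_card F2 hrowF2]
    exact Finset.sum_congr rfl fun i _ => hrow1 i
  have htot : ∀ (G : Finset (ℤ×ℤ)), (∀ x ∈ G, 1 ≤ x.2 ∧ x.2 ≤ (n:ℤ)) →
      ∑ k : Fin n, colSum G (e k) = (G.card : ℤ) := by
    intro G hG
    have h1 : ∑ j ∈ Finset.univ.image e, colSum G j = ∑ k : Fin n, colSum G (e k) :=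
      Finset.sum_image (fun k _ l _ h => einj h)
    rw [← h1, sum_colSum_filter]
    congr 1
    rw [Finset.filter_true_of_mem]
    intro x hx
    obtain ⟨k, hk⟩ := hicc x.2 (hG x hx).1 (hG x hx).2
    exact Finset.mem_image.mpr ⟨k, Finset.mem_univ k, hk⟩
  have hex : ∀ (G : Finset (ℤ×ℤ)) (j : ℤ), colSum G j ≠ 0 → ∃ x ∈ G, x.2 = j := by
    intro G j h
    have hcard : (G.filter fun p => p.2 = j).card ≠ 0 := by
      intro h0; apply h; rw [colSum, h0]; rfl
    obtain ⟨x, hx⟩ := Finset.card_pos.mp (Nat.pos_of_ne_zero hcard)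
    exact ⟨x, (Finset.mem_filter.mp hx).1, (Finset.mem_filter.mp hx).2⟩
  set A := lineDiff F2 F1 with hA
  have habs : ∑ k : Fin n, |colSum F2 (e k) - colSum F1 (e k)| = A := by
    rw [hA, lineDiff]
    have hrow0 : ∑ i ∈ (F2 ∪ F1).image Prod.fst, |rowSum F2 i - rowSum F1 i| = 0 := by
      refine Finset.sum_eq_zero fun i _ => ?_
      rw [hrow1 i]; simp
    rw [hrow0, add_zero]
    have h1 : ∑ j ∈ Finset.univ.image e, |colSum F2 j - colSum F1 j|
        = ∑ k : Fin n, |colSum F2 (e k) - colSum F1 (e k)| :=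
      Finset.sum_image (fun k _ l _ h => einj h)
    rw [← h1]
    refine (Finset.sum_subset ?_ ?_).symm
    · intro j hj
      obtain ⟨x, hx, hx2⟩ := Finset.mem_image.mp hj
      have hx' : 1 ≤ x.2 ∧ x.2 ≤ (n:ℤ) := by
        rcases Finset.mem_union.mp hx with h | h
        · exact hmemcol F2 hs2 x h
        · exact hmemcol F1 hs1 x h
      obtain ⟨k, hk⟩ := hicc x.2 hx'.1 hx'.2
      exact Finset.mem_image.mpr ⟨k, Finset.mem_univ k, by rw [hk, hx2]⟩
    · intro j _ hjimg
      have h2 : colSum F2 j = 0 := by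
        by_contra h
        obtain ⟨x, hx, hx2⟩ := hex F2 j h
        exact hjimg (Finset.mem_image.mpr ⟨x, Finset.mem_union_left _ hx, hx2⟩)
      have h3 : colSum F1 j = 0 := by
        by_contra h
        obtain ⟨x, hx, hx2⟩ := hex F1 j h
        exact hjimg (Finset.mem_image.mpr ⟨x, Finset.mem_union_right _ hx, hx2⟩)
      rw [h2, h3]; simp
  -- KEY inequality
  have key : ∀ t : ℕ, 1 ≤ t → t ≤ n →
      (t:ℤ) * ((R.filter fun i => (t:ℤ) ≤ rowSum F2 i).card : ℤ) ≤ A := by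
    intro t ht1 htn
    set Kt : Finset (Fin n) := Finset.univ.filter (fun k : Fin n => (k:ℕ) < t) with hKt
    set Ct : Finset ℤ := Kt.image e with hCt
    have hKtcard : Kt.card = t := by
      have h1 : Kt.card = ∑ k : Fin n, if (k:ℕ) < t then 1 else 0 := Finset.card_filter _ _
      rw [h1, Fin.sum_univ_eq_sum_range (fun j => if j < t then 1 else 0) n,
        ← Finset.card_filter]
      have h2 : (Finset.range n).filter (fun j => j < t) = Finset.range t := by
        ext j; simp only [Finset.mem_filter, Finset.mem_range]; omega
      rw [h2, Finset.card_range]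
    have hCtcard : Ct.card = t := by
      rw [hCt, Finset.card_image_of_injOn einj.injOn, hKtcard]
    set a : Finset (ℤ×ℤ) → ℤ → ℤ :=
      fun G i => ((G.filter fun x => x.1 = i ∧ x.2 ∈ Ct).card : ℤ) with ha
    have hsuma : ∀ (G : Finset (ℤ×ℤ)), (∀ x ∈ G, x.1 ∈ R) →
        ∑ i ∈ R, a G i = ∑ k ∈ Kt, colSum G (e k) := by
      intro G hG
      have h1 : ∑ j ∈ Ct, colSum G j = ∑ k ∈ Kt, colSum G (e k) :=
        Finset.sum_image (fun k _ l _ h => einj h)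
      rw [← h1, sum_colSum_filter]
      have h2 : ∀ i, a G i = rowSum (G.filter fun x => x.2 ∈ Ct) i := by
        intro i
        have hfe : (G.filter fun x => x.1 = i ∧ x.2 ∈ Ct)
            = (G.filter fun x => x.2 ∈ Ct).filter (fun x => x.1 = i) := by
          rw [Finset.filter_filter]
          exact Finset.filter_congr fun x _ => and_comm
        simp only [ha, rowSum, hfe]
      rw [Finset.sum_congr rfl fun i _ => h2 i,
        hsum_card _ (fun x hx => hG x (Finset.mem_filter.mp hx).1)]
    have ha2le : ∀ i, a F2 i ≤ rowSum F2 i := by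
      intro i
      simp only [ha, rowSum]
      have hsub : (F2.filter fun x => x.1 = i ∧ x.2 ∈ Ct) ⊆ F2.filter fun x => x.1 = i := by
        intro x hx
        have := Finset.mem_filter.mp hx
        exact Finset.mem_filter.mpr ⟨this.1, this.2.1⟩
      exact_mod_cast Finset.card_le_card hsub
    have ha3le : ∀ i, a F3 i ≤ rowSum F2 i := by
      intro i
      rw [hrows i]
      simp only [ha, rowSum]
      have hsub : (F3.filter fun x => x.1 = i ∧ x.2 ∈ Ct) ⊆ F3.filter fun x => x.1 = i := by
        intro x hx
        have := Finset.mem_filter.mp hx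
        exact Finset.mem_filter.mpr ⟨this.1, this.2.1⟩
      exact_mod_cast Finset.card_le_card hsub
    have ha23 : ∀ i, a F2 i + a F3 i ≤ (t:ℤ) := by
      intro i
      have hsub : (F2.filter fun x => x.1 = i ∧ x.2 ∈ Ct)
          ∪ (F3.filter fun x => x.1 = i ∧ x.2 ∈ Ct) ⊆ ({i} ×ˢ Ct) := by
        intro x hx
        rcases Finset.mem_union.mp hx with h | h
        · obtain ⟨_, h1, h2⟩ := Finset.mem_filter.mp h
          exact Finset.mem_product.mpr ⟨Finset.mem_singleton.mpr h1, h2⟩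
        · obtain ⟨_, h1, h2⟩ := Finset.mem_filter.mp h
          exact Finset.mem_product.mpr ⟨Finset.mem_singleton.mpr h1, h2⟩
      have hdis : Disjoint (F2.filter fun x => x.1 = i ∧ x.2 ∈ Ct)
          (F3.filter fun x => x.1 = i ∧ x.2 ∈ Ct) :=
        Finset.disjoint_filter_filter hdisj
      have hcard := Finset.card_le_card hsub
      rw [Finset.card_union_of_disjoint hdis, Finset.card_product,
        Finset.card_singleton, one_mul, hCtcard] at hcard
      simp only [ha]
      exact_mod_cast hcard
    have ha1ge : ∀ i ∈ R, min (rowSum F2 i) (t:ℤ) ≤ a F1 i := by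
      intro i hi
      by_cases hcase : ∀ x ∈ F1, x.1 = i → x.2 ∈ Ct
      · have hfe : (F1.filter fun x => x.1 = i ∧ x.2 ∈ Ct) = F1.filter fun x => x.1 = i := by
          ext x
          simp only [Finset.mem_filter]
          exact ⟨fun ⟨h1, h2, _⟩ => ⟨h1, h2⟩, fun ⟨h1, h2⟩ => ⟨h1, h2, hcase x h1 h2⟩⟩
        have heq : a F1 i = rowSum F1 i := by simp only [ha, rowSum, hfe]
        rw [heq, hrow1 i]
        exact min_le_left _ _
      · push_neg at hcase
        obtain ⟨x, hxF, hx1, hx2⟩ := hcase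
        have hb := hmemcol F1 hs1 x hxF
        have hib : (i, x.2) ∈ F1 := by
          have hxe : (i, x.2) = x := Prod.ext hx1.symm rfl
          rw [hxe]; exact hxF
        have hall : ∀ c ∈ Ct, (i, c) ∈ F1 := by
          intro c hc
          by_contra hia
          obtain ⟨k, hkK, hke⟩ := Finset.mem_image.mp hc
          have hbn : (x.2 - 1).toNat < n := by omega
          set l : Fin n := σ.symm ⟨(x.2-1).toNat, hbn⟩ with hl
          have hel : e l = x.2 := by
            simp only [he, hl, Equiv.apply_symm_apply]
            omega
          have hlK : l ∉ Kt := fun h => hx2 (hel ▸ Finset.mem_image_of_mem e h)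
          have hkl : k ≤ l := by
            have hk' : (k:ℕ) < t := (Finset.mem_filter.mp hkK).2
            have hl' : ¬ (l:ℕ) < t := fun h =>
              hlK (Finset.mem_filter.mpr ⟨Finset.mem_univ _, h⟩)
            exact Fin.le_def.mpr (by omega)
          have hvba : colSum F1 (e l) ≤ colSum F1 (e k) := hsort1 k l hkl
          rw [hel, hke] at hvba
          have hinj : ∀ (c' : ℤ), Set.InjOn Prod.fst
              ((F1.filter fun y => y.2 = c') : Set (ℤ×ℤ)) := by
            intro c' y hy z hz hyz
            have hy2 := (Finset.mem_filter.mp hy).2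
            have hz2 := (Finset.mem_filter.mp hz).2
            exact Prod.ext hyz (hy2.trans hz2.symm)
          set Ra := (F1.filter fun y => y.2 = c).image Prod.fst with hRa
          set Rb := (F1.filter fun y => y.2 = x.2).image Prod.fst with hRb
          have hRacard : (Ra.card : ℤ) = colSum F1 c := by
            rw [hRa, Finset.card_image_of_injOn (hinj c), colSum]
          have hRbcard : (Rb.card : ℤ) = colSum F1 x.2 := by
            rw [hRb, Finset.card_image_of_injOn (hinj x.2), colSum]
          have hiRb : i ∈ Rb := by
            have hm : (i, x.2) ∈ F1.filter (fun y => y.2 = x.2) :=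
              Finset.mem_filter.mpr ⟨hib, rfl⟩
            rw [hRb]
            exact Finset.mem_image_of_mem Prod.fst hm
          have hiRa : i ∉ Ra := by
            intro h
            rw [hRa] at h
            obtain ⟨y, hy, hy1⟩ := Finset.mem_image.mp h
            have hyf := Finset.mem_filter.mp hy
            have hye : y = (i, c) := Prod.ext hy1 hyf.2
            exact hia (hye ▸ hyf.1)
          have hcards : Rb.card ≤ Ra.card := by omega
          have hnsub : ¬ Ra ⊆ Rb := by
            intro hsub
            have hsub' : Ra ⊆ Rb.erase i :=
              fun y hy => Finset.mem_erase.mpr ⟨fun h => hiRa (h ▸ hy), hsub hy⟩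
            have hle := Finset.card_le_card hsub'
            rw [Finset.card_erase_of_mem hiRb] at hle
            have hpos : 0 < Rb.card := Finset.card_pos.mpr ⟨i, hiRb⟩
            omega
          obtain ⟨q, hqRa, hqRb⟩ := Finset.not_subset.mp hnsub
          have hqRa' := hqRa
          rw [hRa] at hqRa'
          obtain ⟨z, hz, hz1⟩ := Finset.mem_image.mp hqRa'
          have hzz := Finset.mem_filter.mp hz
          have hzeq : z = (q, c) := Prod.ext hz1 hzz.2
          have hqcF : (q, c) ∈ F1 := hzeq ▸ hzz.1
          have hqbF : (q, x.2) ∉ F1 := by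
            intro h
            apply hqRb
            have hm : (q, x.2) ∈ F1.filter (fun y => y.2 = x.2) :=
              Finset.mem_filter.mpr ⟨h, rfl⟩
            rw [hRb]
            exact Finset.mem_image_of_mem Prod.fst hm
          have hqi : i ≠ q := fun h => hiRa (by rw [h]; exact hqRa)
          exact not_unique_of_switch F1 i q x.2 c hib hqcF hia hqbF hqi hud
        have hsub : Ct.image (fun c => ((i, c) : ℤ×ℤ))
            ⊆ F1.filter fun y => y.1 = i ∧ y.2 ∈ Ct := by
          intro y hy
          obtain ⟨c, hc, hc2⟩ := Finset.mem_image.mp hy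
          rw [← hc2]
          exact Finset.mem_filter.mpr ⟨hall c hc, rfl, hc⟩
        have hinj2 : Set.InjOn (fun c => ((i, c) : ℤ×ℤ)) (Ct : Set ℤ) := by
          intro c1 _ c2 _ h
          exact congrArg Prod.snd h
        have hle := Finset.card_le_card hsub
        rw [Finset.card_image_of_injOn hinj2, hCtcard] at hle
        have hta : (t:ℤ) ≤ a F1 i := by simp only [ha]; exact_mod_cast hle
        exact le_trans (min_le_right _ _) hta
    have hper : ∀ i ∈ R, (if (t:ℤ) ≤ rowSum F2 i then (t:ℤ) else 0)
        ≤ 2 * a F1 i - a F2 i - a F3 i := by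
      intro i hi
      have h1 := ha1ge i hi
      have h2 := ha2le i
      have h3 := ha3le i
      have h4 := ha23 i
      by_cases hc : (t:ℤ) ≤ rowSum F2 i
      · rw [if_pos hc]
        rw [min_eq_right hc] at h1
        linarith
      · rw [if_neg hc]
        rw [min_eq_left (le_of_lt (lt_of_not_ge hc))] at h1
        linarith
    have hsum1 : (t:ℤ) * ((R.filter fun i => (t:ℤ) ≤ rowSum F2 i).card : ℤ)
        = ∑ i ∈ R, (if (t:ℤ) ≤ rowSum F2 i then (t:ℤ) else 0) := by
      rw [← Finset.sum_filter, Finset.sum_const, nsmul_eq_mul]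
      ring
    have hsum2 : ∑ i ∈ R, (2 * a F1 i - a F2 i - a F3 i)
        = 2 * ∑ k ∈ Kt, (colSum F1 (e k) - colSum F2 (e k)) := by
      rw [Finset.sum_sub_distrib, Finset.sum_sub_distrib, ← Finset.mul_sum,
        hsuma F1 hrowsubF1, hsuma F2 hrowF2, hsuma F3 hrowsubF3]
      have h3 : ∑ k ∈ Kt, colSum F3 (e k) = ∑ k ∈ Kt, colSum F2 (e k) :=
        Finset.sum_congr rfl fun k _ => (hcols (e k)).symm
      rw [h3, Finset.sum_sub_distrib]
      ring
    have hsum3 : 2 * ∑ k ∈ Kt, (colSum F1 (e k) - colSum F2 (e k)) ≤ A := by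
      set g : Fin n → ℤ := fun k => colSum F1 (e k) - colSum F2 (e k) with hg
      have htotg : ∑ k : Fin n, g k = 0 := by
        simp only [hg]
        rw [Finset.sum_sub_distrib, htot F1 (hmemcol F1 hs1), htot F2 (hmemcol F2 hs2),
          hcard12]
        ring
      have hsplit : ∑ k ∈ Ktᶜ, g k + ∑ k ∈ Kt, g k = 0 := by
        rw [Finset.sum_compl_add_sum, htotg]
      have hle1 : ∑ k ∈ Kt, g k ≤ ∑ k ∈ Kt, |g k| :=
        Finset.sum_le_sum fun k _ => le_abs_self _
      have hle2 : - ∑ k ∈ Ktᶜ, g k ≤ ∑ k ∈ Ktᶜ, |g k| := by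
        rw [← Finset.sum_neg_distrib]
        exact Finset.sum_le_sum fun k _ => neg_le_abs (g k)
      have hcombine : ∑ k ∈ Ktᶜ, |g k| + ∑ k ∈ Kt, |g k| = ∑ k : Fin n, |g k| :=
        Finset.sum_compl_add_sum _ _
      have habs' : ∑ k : Fin n, |g k| = A := by
        rw [← habs]
        exact Finset.sum_congr rfl fun k _ => abs_sub_comm _ _
      linarith
    calc (t:ℤ) * ((R.filter fun i => (t:ℤ) ≤ rowSum F2 i).card : ℤ)
        = ∑ i ∈ R, (if (t:ℤ) ≤ rowSum F2 i then (t:ℤ) else 0) := hsum1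
      _ ≤ ∑ i ∈ R, (2 * a F1 i - a F2 i - a F3 i) := Finset.sum_le_sum hper
      _ = 2 * ∑ k ∈ Kt, (colSum F1 (e k) - colSum F2 (e k)) := hsum2
      _ ≤ A := hsum3
  -- final assembly
  obtain ⟨x0, hx0⟩ := hF2ne
  have hn1 : 1 ≤ n := by
    have := hmemcol F2 hs2 x0 hx0
    omega
  have hRne : R.Nonempty := ⟨x0.1, hrowF2 x0 hx0⟩
  have hkey1 := key 1 le_rfl hn1
  have hfil : (R.filter fun i => ((1:ℕ):ℤ) ≤ rowSum F2 i) = R := by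
    apply Finset.filter_true_of_mem
    intro i hi
    exact_mod_cast hRpos i hi
  rw [hfil] at hkey1
  have hRA : (R.card : ℤ) ≤ A := by push_cast at hkey1; linarith
  obtain ⟨i0, hi0R, hi0max⟩ := Finset.exists_max_image R (fun i => rowSum F2 i) hRne
  have hM1 : 1 ≤ rowSum F2 i0 := hRpos i0 hi0R
  have hrow_le_n : rowSum F1 i0 ≤ (n:ℤ) := by
    rw [rowSum]
    have hmap : ∀ y ∈ F1.filter fun p => p.1 = i0, y.2 ∈ Finset.Icc (1:ℤ) n := by
      intro y hy
      exact Finset.mem_Icc.mpr (hmemcol F1 hs1 y (Finset.mem_filter.mp hy).1)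
    have hinj : Set.InjOn Prod.snd ((F1.filter fun p => p.1 = i0) : Set (ℤ×ℤ)) := by
      intro y hy z hz h
      have hy2 := (Finset.mem_filter.mp (Finset.mem_coe.mp hy)).2
      have hz2 := (Finset.mem_filter.mp (Finset.mem_coe.mp hz)).2
      exact Prod.ext (hy2.trans hz2.symm) h
    have hc := Finset.card_le_card_of_injOn Prod.snd hmap hinj
    have hicard : (Finset.Icc (1:ℤ) n).card = n := by
      rw [Int.card_Icc]
      omega
    rw [hicard] at hc
    exact_mod_cast hc
  have hMn : rowSum F2 i0 ≤ (n:ℤ) := by rw [← hrow1 i0]; exact hrow_le_n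
  set tM := (rowSum F2 i0).toNat with htM
  have htMZ : (tM:ℤ) = rowSum F2 i0 := Int.toNat_of_nonneg (by omega)
  have htM1 : 1 ≤ tM := by omega
  have htMn : tM ≤ n := by omega
  have hkeyM := key tM htM1 htMn
  rw [htMZ] at hkeyM
  have hmemf : i0 ∈ R.filter fun i => rowSum F2 i0 ≤ rowSum F2 i :=
    Finset.mem_filter.mpr ⟨hi0R, le_refl _⟩
  have hcard1 : (1:ℤ) ≤ ((R.filter fun i => rowSum F2 i0 ≤ rowSum F2 i).card : ℤ) := by
    exact_mod_cast Finset.card_pos.mpr ⟨i0, hmemf⟩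
  have hMA : rowSum F2 i0 ≤ A := by nlinarith
  have hF2c : (F2.card : ℤ) ≤ (R.card : ℤ) * rowSum F2 i0 := by
    rw [← hsum_card F2 hrowF2]
    calc ∑ i ∈ R, rowSum F2 i ≤ ∑ i ∈ R, rowSum F2 i0 :=
          Finset.sum_le_sum fun i hi => hi0max i hi
      _ = (R.card : ℤ) * rowSum F2 i0 := by rw [Finset.sum_const, nsmul_eq_mul]
  have hA0 : (0:ℤ) ≤ A := le_trans (by positivity) hRA
  have hfin : (F2.card : ℤ) ≤ A * A :=
    hF2c.trans (mul_le_mul hRA hMA (by linarith) hA0)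
  have hfinR : (F2.card : ℝ) ≤ (A:ℝ) * A := by exact_mod_cast hfin
  have hAR : ((lineDiff F2 F1 : ℤ) : ℝ) = (A:ℝ) := by rw [hA]
  simp only [alpha]
  rw [hAR]
  nlinarith [sq_nonneg ((A:ℝ))]
end

section
/- Let k ≥ 1 and let a_1 > a_2 > … > a_k and b_1 < b_2 < … < b_k be integers. Then Σ_{t=1}^{k} |b_t − a_t| ≥ ⌊k²/2⌋. -/
open Finset

/-!
Put `c t = b t - a t`; consecutive values of `c` then differ by at least `2`. Pairing `t` with its
mirror `k + 1 - t`, the terms `|c t| + |c (k + 1 - t)|` are at least the difference of the two,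
hence at least `2 |k + 1 - 2t|`, and `∑ |k + 1 - 2t| = ⌊k² / 2⌋`.
-/

theorem mul_sub_le_sub_of_add_le_succ {c : ℕ → ℤ} {d : ℤ} {n : ℕ}
    (hc : ∀ i, i + 1 < n → c i + d ≤ c (i + 1)) {i j : ℕ} (hij : i ≤ j) (hj : j < n) :
    d * (j - i) ≤ c j - c i := by
  induction j, hij using Nat.le_induction with
  | base => simp
  | succ j hij ih =>
    have step := hc j hj
    have := ih (by omega)
    push_cast
    linarith

theorem sum_range_abs_sub_one_sub_two_mul (k : ℕ) :
    ∑ i ∈ range k, |(k : ℤ) - 1 - 2 * i| = ((k ^ 2 / 2 : ℕ) : ℤ) := by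
  induction k using Nat.twoStepInduction with
  | zero => simp
  | one => simp
  | more n ih _ =>
    rw [sum_range_succ, sum_range_succ']
    have middle : ∑ i ∈ range n, |((n + 2 : ℕ) : ℤ) - 1 - 2 * ((i + 1 : ℕ) : ℤ)|
        = ∑ i ∈ range n, |(n : ℤ) - 1 - 2 * i| := by
      refine sum_congr rfl fun i _ => ?_
      push_cast
      ring_nf
    have top : |((n + 2 : ℕ) : ℤ) - 1 - 2 * ((n + 1 : ℕ) : ℤ)| = n + 1 := by
      push_cast
      rw [abs_of_nonpos (by linarith)]
      ring
    have bottom : |((n + 2 : ℕ) : ℤ) - 1 - 2 * ((0 : ℕ) : ℤ)| = n + 1 := by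
      push_cast
      rw [abs_of_nonneg (by linarith)]
      ring
    have floor_step : (n + 2) ^ 2 / 2 = n ^ 2 / 2 + 2 * (n + 1) := by
      rw [show (n + 2) ^ 2 = n ^ 2 + 2 * (2 * (n + 1)) by ring, Nat.add_mul_div_left _ _ two_pos]
    rw [middle, ih, top, bottom, floor_step]
    push_cast
    ring

section GapTwo

variable {k : ℕ} {c : ℕ → ℤ} (hc : ∀ i, i + 1 < k → c i + 2 ≤ c (i + 1))
include hc

theorem two_mul_abs_le_abs_add_abs_reflect {i : ℕ} (hi : i < k) :
    2 * |(k : ℤ) - 1 - 2 * i| ≤ |c i| + |c (k - 1 - i)| := by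
  have hmirror : ((k - 1 - i : ℕ) : ℤ) = k - 1 - i := by omega
  rcases le_total i (k - 1 - i) with hle | hle
  · have gap := mul_sub_le_sub_of_add_le_succ hc hle (by omega)
    rw [abs_of_nonneg (by omega)]
    linarith [le_abs_self (c (k - 1 - i)), neg_abs_le (c i)]
  · have gap := mul_sub_le_sub_of_add_le_succ hc hle hi
    rw [abs_of_nonpos (by omega)]
    linarith [le_abs_self (c i), neg_abs_le (c (k - 1 - i))]

theorem floor_sq_half_le_sum_abs : ((k ^ 2 / 2 : ℕ) : ℤ) ≤ ∑ i ∈ range k, |c i| := by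
  have paired : 2 * ∑ i ∈ range k, |(k : ℤ) - 1 - 2 * i| ≤ 2 * ∑ i ∈ range k, |c i| :=
    calc 2 * ∑ i ∈ range k, |(k : ℤ) - 1 - 2 * i|
        = ∑ i ∈ range k, 2 * |(k : ℤ) - 1 - 2 * i| := mul_sum _ _ _
      _ ≤ ∑ i ∈ range k, (|c i| + |c (k - 1 - i)|) :=
        sum_le_sum fun i hi => two_mul_abs_le_abs_add_abs_reflect hc (mem_range.mp hi)
      _ = 2 * ∑ i ∈ range k, |c i| := by
        rw [sum_add_distrib, sum_range_reflect (fun i => |c i|)]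
        ring
  rw [← sum_range_abs_sub_one_sub_two_mul]
  linarith

end GapTwo

theorem sum_abs_ge_of_opposite_monotone_general (k : ℕ) (a b : ℕ → ℤ)
    (ha : ∀ s t : ℕ, 1 ≤ s → s < t → t ≤ k → a t < a s)
    (hb : ∀ s t : ℕ, 1 ≤ s → s < t → t ≤ k → b s < b t) :
    ((k ^ 2 / 2 : ℕ) : ℤ) ≤ ∑ t ∈ Finset.Icc 1 k, |b t - a t| := by
  have gap : ∀ i, i + 1 < k → (b (i + 1) - a (i + 1)) + 2 ≤ b (i + 1 + 1) - a (i + 1 + 1) := by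
    intro i hi
    have := ha (i + 1) (i + 1 + 1) (by omega) (by omega) (by omega)
    have := hb (i + 1) (i + 1 + 1) (by omega) (by omega) (by omega)
    omega
  calc ((k ^ 2 / 2 : ℕ) : ℤ) ≤ ∑ i ∈ range k, |b (i + 1) - a (i + 1)| :=
        floor_sq_half_le_sum_abs (c := fun i => b (i + 1) - a (i + 1)) gap
    _ = ∑ t ∈ Icc 1 k, |b t - a t| := by
        rw [← Ico_add_one_right_eq_Icc, sum_Ico_eq_sum_range, Nat.add_sub_cancel]
        simp only [add_comm 1]

/-- If `a_1 > a_2 > … > a_k` and `b_1 < b_2 < … < b_k` are integers, then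
`Σ_{t=1}^{k} |b_t − a_t| ≥ ⌊k²/2⌋`. -/
theorem sum_abs_ge_of_opposite_monotone (k : ℕ) (hk : 1 ≤ k) (a b : ℕ → ℤ)
    (ha : ∀ s t : ℕ, 1 ≤ s → s < t → t ≤ k → a t < a s)
    (hb : ∀ s t : ℕ, 1 ≤ s → s < t → t ≤ k → b s < b t) :
    ((k ^ 2 / 2 : ℕ) : ℤ) ≤ ∑ t ∈ Finset.Icc 1 k, |b t - a t| :=
  sum_abs_ge_of_opposite_monotone_general k a b ha hb
end
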